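/- Suppose real tensors d_i and p_{ijk} satisfy Relations (1)-(4) of the 2D TQFT classification. Then the matrix c_{ij} = Σ_k d_k p_{kij} is a real symmetric idempotent matrix, and hence the torus invariant Σ_i c_{ii} is a non-negative integer (equal to the rank of c). -/

import Mathlib

/-!
Relation (4) says that `c` acts as the identity on the first slot of `p`; since `c` is itself `p`
contracted with `d`, symmetry of `p` turns this into `c * c = c`. An idempotent matrix is the
projection onto its range along its kernel, so its trace is the dimension of its range.
-/

open Finset

theorem Matrix.trace_eq_rank_of_isIdempotentElem {K ι : Type*} [Field K] [Fintype ι]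
    [DecidableEq ι] {A : Matrix ι ι K} (hA : IsIdempotentElem A) : A.trace = A.rank := by
  have hproj := LinearMap.IsIdempotentElem.isProj_range _ (hA.map Matrix.toLinAlgEquiv')
  rw [← Matrix.trace_toLin'_eq, Matrix.rank]
  exact hproj.trace

section ContractFirst

variable {ι R : Type*} [Fintype ι] [CommSemiring R]

def contractFirst (d : ι → R) (p : ι → ι → ι → R) : Matrix ι ι R :=
  Matrix.of fun i j => ∑ k, d k * p k i j

variable {d : ι → R} {p : ι → ι → ι → R}

theorem transpose_contractFirst (hp : ∀ k i j, p k i j = p k j i) :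
    (contractFirst d p).transpose = contractFirst d p := by
  ext i j
  simp only [Matrix.transpose_apply, contractFirst, Matrix.of_apply, hp _ j i]

theorem isIdempotentElem_contractFirst (hp : ∀ i j k, p i j k = p j i k)
    (hunit : ∀ i l m, ∑ k, ∑ j, d k * p k i j * p j l m = p i l m) :
    IsIdempotentElem (contractFirst d p) := by
  have hunit' : ∀ i l m, ∑ j, contractFirst d p i j * p j l m = p i l m := fun i l m => by
    simp only [contractFirst, Matrix.of_apply, sum_mul]
    rw [sum_comm, hunit]
  ext i j
  calc (contractFirst d p * contractFirst d p) i j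
      = ∑ l, contractFirst d p i l * ∑ m, d m * p l m j := by
        simp only [Matrix.mul_apply, contractFirst, Matrix.of_apply, hp _ _ j]
    _ = ∑ m, d m * ∑ l, contractFirst d p i l * p l m j := by
        simp only [mul_sum]
        rw [sum_comm]
        exact sum_congr rfl fun _ _ => sum_congr rfl fun _ _ => by ring
    _ = contractFirst d p i j := by
        simp only [hunit']
        simp only [contractFirst, Matrix.of_apply, hp i]

end ContractFirst

theorem torus_invariant_nonneg_integer_general {n : ℕ} (d : Fin n → ℝ)
    (p : Fin n → Fin n → Fin n → ℝ)
    (h2 : ∀ i j k, p i j k = p j i k ∧ p i j k = p i k j)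
    (h4 : ∀ i l m, ∑ k, ∑ j, d k * p k i j * p j l m = p i l m) :
    ∀ c : Matrix (Fin n) (Fin n) ℝ, (∀ i j, c i j = ∑ k, d k * p k i j) →
      c.transpose = c ∧ c * c = c ∧ Matrix.trace c = (c.rank : ℝ) := by
  intro c hc
  obtain rfl : c = contractFirst d p := Matrix.ext hc
  have hidem := isIdempotentElem_contractFirst (fun i j k => (h2 i j k).1) h4
  exact ⟨transpose_contractFirst fun k i j => (h2 k i j).2, hidem,
    Matrix.trace_eq_rank_of_isIdempotentElem hidem⟩

/-- For real tensors `d`, `p` satisfying Relations (1)-(4), the matrix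
`c_{ij} = Σ_k d_k p_{kij}` is a real symmetric idempotent matrix, and the
torus invariant `Σ_i c_{ii}` is a non-negative integer, equal to the rank
of `c`. -/
theorem torus_invariant_nonneg_integer {n : ℕ} (d : Fin n → ℝ)
    (p : Fin n → Fin n → Fin n → ℝ)
    (h1 : ∀ i j l m, ∑ k, p i j k * p k l m = ∑ k, p i l k * p k j m)
    (h2 : ∀ i j k, p i j k = p j i k ∧ p i j k = p i k j)
    (h3 : ∀ i, ∑ k, ∑ j, d k * p k i j * d j = d i)
    (h4 : ∀ i l m, ∑ k, ∑ j, d k * p k i j * p j l m = p i l m) :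
    ∀ c : Matrix (Fin n) (Fin n) ℝ, (∀ i j, c i j = ∑ k, d k * p k i j) →
      c.transpose = c ∧ c * c = c ∧ Matrix.trace c = (c.rank : ℝ) :=
  torus_invariant_nonneg_integer_general d p h2 h4
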